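/- arXiv:1411.6586 — 6 statements merged into one kernel-verified Lean document; each statement's English description precedes it below -/
import Mathlib

section
/- Let f : (0,∞) → ℝ be continuous, strictly increasing and convex. Then for all distinct x, y ∈ (0,∞) with x < y, f( (x·y)^{1/4} · ((x+y)/2)^{1/2} ) ≤ (1/(y−x)) · ∫_x^y f(t) dt. (This resolves affirmatively the conjecture of Ebanks that P_f ≤ R_f for strictly increasing convex f.) -/
/-!
Since `x y ≤ ((x + y) / 2) ^ 2`, the mean `(x y)^{1/4} ((x + y) / 2)^{1/2}` is at most the
arithmetic mean `(x + y) / 2`, so monotonicity gives `P_f ≤ f ((x + y) / 2)`. The latter is at most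
`R_f` by the left Hermite–Hadamard inequality, which is Jensen's inequality for the uniform
distribution on `[x, y]`.
-/

open Set MeasureTheory intervalIntegral

theorem rpow_quarter_mul_sqrt_le_average {x y : ℝ} (hx : 0 ≤ x) (hy : 0 ≤ y) :
    (x * y) ^ ((1 : ℝ) / 4) * ((x + y) / 2) ^ ((1 : ℝ) / 2) ≤ (x + y) / 2 := by
  set m := (x + y) / 2 with hm_def
  have hm : 0 ≤ m := by positivity
  have hgeom : (x * y) ^ ((1 : ℝ) / 4) ≤ m ^ ((1 : ℝ) / 2) :=
    calc (x * y) ^ ((1 : ℝ) / 4) ≤ (m ^ (2 : ℝ)) ^ ((1 : ℝ) / 4) := by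
          gcongr
          rw [Real.rpow_two]
          nlinarith [sq_nonneg (x - y)]
      _ = m ^ ((1 : ℝ) / 2) := by rw [← Real.rpow_mul hm]; norm_num
  calc (x * y) ^ ((1 : ℝ) / 4) * m ^ ((1 : ℝ) / 2) ≤ m ^ ((1 : ℝ) / 2) * m ^ ((1 : ℝ) / 2) := by
        gcongr
    _ = m := by rw [← Real.rpow_add' hm (by norm_num)]; norm_num

theorem interval_average_id {a b : ℝ} (hab : a ≠ b) : ⨍ t in a..b, t = (a + b) / 2 := by
  rw [interval_average_eq, integral_id, smul_eq_mul]
  field_simp [sub_ne_zero.2 hab.symm]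
  ring

theorem ConvexOn.map_midpoint_le_interval_average {f : ℝ → ℝ} {a b : ℝ} (hab : a < b)
    (hconv : ConvexOn ℝ (Icc a b) f) (hcont : ContinuousOn f (Icc a b)) :
    f ((a + b) / 2) ≤ ⨍ t in a..b, f t := by
  have hmem : ∀ᵐ t ∂volume.restrict (Ioc a b), t ∈ Icc a b :=
    ae_restrict_of_forall_mem measurableSet_Ioc fun _ ht => Ioc_subset_Icc_self ht
  have hjensen := hconv.map_set_average_le hcont isClosed_Icc (by simp [hab]) (by simp) hmem
    (continuous_id.integrableOn_Icc.mono_set Ioc_subset_Icc_self)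
    (hcont.integrableOn_Icc.mono_set Ioc_subset_Icc_self)
  rwa [← uIoc_of_le hab.le, interval_average_id hab.ne] at hjensen

theorem ebanks_conjecture_general (f : ℝ → ℝ)
    (hmono : StrictMonoOn f (Ioi 0))
    (hconv : ConvexOn ℝ (Ioi 0) f) :
    ∀ x y : ℝ, 0 < x → x < y →
      f ((x * y) ^ ((1 : ℝ) / 4) * ((x + y) / 2) ^ ((1 : ℝ) / 2)) ≤
        (1 / (y - x)) * ∫ t in x..y, f t := by
  intro x y hx hxy
  have hy : 0 < y := hx.trans hxy
  have hIcc : Icc x y ⊆ Ioi 0 := fun t ht => hx.trans_le ht.1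
  have hmidpoint := (hconv.subset hIcc (convex_Icc x y)).map_midpoint_le_interval_average hxy
    ((hconv.continuousOn isOpen_Ioi).mono hIcc)
  rw [interval_average_eq, smul_eq_mul, ← one_div] at hmidpoint
  exact (hmono.monotoneOn (mem_Ioi.2 (by positivity)) (mem_Ioi.2 (by positivity))
    (rpow_quarter_mul_sqrt_le_average hx.le hy.le)).trans hmidpoint

/-- Ebanks' conjecture: for a continuous, strictly increasing, convex function
`f` on `(0,∞)`, we have `P_f(x,y) ≤ R_f(x,y)` for all `0 < x < y`. -/
theorem ebanks_conjecture (f : ℝ → ℝ)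
    (hcont : ContinuousOn f (Ioi 0))
    (hmono : StrictMonoOn f (Ioi 0))
    (hconv : ConvexOn ℝ (Ioi 0) f) :
    ∀ x y : ℝ, 0 < x → x < y →
      f ((x * y) ^ ((1 : ℝ) / 4) * ((x + y) / 2) ^ ((1 : ℝ) / 2)) ≤
        (1 / (y - x)) * ∫ t in x..y, f t :=
  ebanks_conjecture_general f hmono hconv
end

section
/- Let f : (0,∞) → (0,∞) be continuously differentiable and strictly increasing with f' increasing (i.e. f convex). Then for all distinct x, y ∈ (0,∞) with y < x, log I(f(x), f(y)) ≥ (1/(x−y)) · ∫_y^x log f(u) du. -/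
open Set MeasureTheory intervalIntegral

/-- The identric mean `I(a,b) = (1/e) * (a^a / b^b)^(1/(a-b))` of distinct
positive reals `a`, `b`. -/
noncomputable def identric (a b : ℝ) : ℝ :=
  (1 / Real.exp 1) * (a ^ a / b ^ b) ^ (1 / (a - b))

/-!
On `[y, x]` a convex `f` lies below its chord `L`, so the mean of `log ∘ f` is at most the mean of
`log ∘ L`. Since `L` is affine with `L y = f y`, `L x = f x`, the substitution `t = L u` turns the
latter into the mean of `log` over `[f y, f x]`, which is `log I(f x, f y)`.
-/

open Real

lemma log_identric_eq_integral_div {a b : ℝ} (ha : 0 < a) (hb : 0 < b) (hab : a ≠ b) :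
    log (identric a b) = (∫ t in b..a, log t) / (a - b) := by
  have hab' : a - b ≠ 0 := sub_ne_zero.2 hab
  have hpow : 0 < a ^ a / b ^ b := by positivity
  rw [identric, one_div (exp 1), log_mul (by positivity) (by positivity), log_inv, log_exp,
    log_rpow hpow, log_div (by positivity) (by positivity), log_rpow ha, log_rpow hb, integral_log]
  field_simp
  ring

lemma ConvexOn.le_chord {f : ℝ → ℝ} {x y u : ℝ} (hf : ConvexOn ℝ (Icc y x) f)
    (hu : u ∈ Icc y x) : f u ≤ f y + (f x - f y) / (x - y) * (u - y) := by
  rcases hu.1.eq_or_lt with rfl | hyu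
  · simp
  rcases hu.2.eq_or_lt with rfl | hux
  · rw [div_mul_cancel₀ _ (sub_pos.2 hyu).ne', add_sub_cancel]
  have hyx := hyu.trans hux
  have := hf.secant_mono_aux2 (left_mem_Icc.2 hyx.le) (right_mem_Icc.2 hyx.le) hyu hux
  rw [div_le_iff₀ (sub_pos.2 hyu)] at this
  linarith

lemma mean_log_chord_eq_log_identric {a b x y : ℝ} (ha : 0 < a) (hb : 0 < b) (hab : a ≠ b) (hxy : x ≠ y) :
    (1 / (x - y)) * ∫ u in y..x, log (b + (a - b) / (x - y) * (u - y)) = log (identric a b) := by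
  set s := (a - b) / (x - y)
  have hs : s ≠ 0 := div_ne_zero (sub_ne_zero.2 hab) (sub_ne_zero.2 hxy)
  have hL : ∀ u, b + s * (u - y) = s * u + (b - s * y) := fun u ↦ by ring
  simp_rw [hL]
  rw [integral_comp_mul_add _ hs, log_identric_eq_integral_div ha hb hab]
  have hsx : s * x + (b - s * y) = a := by
    simp only [s]; field_simp [sub_ne_zero.2 hxy]; ring
  have hsy : s * y + (b - s * y) = b := by ring
  rw [hsx, hsy, smul_eq_mul]
  simp only [s]
  field_simp [sub_ne_zero.2 hxy, sub_ne_zero.2 hab]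

theorem ConvexOn.mean_log_le_log_identric {f : ℝ → ℝ} {x y : ℝ} (hyx : y < x)
    (hf : ConvexOn ℝ (Icc y x) f) (hfc : ContinuousOn f (Icc y x))
    (hpos : ∀ u ∈ Icc y x, 0 < f u) (hne : f x ≠ f y) :
    (1 / (x - y)) * ∫ u in y..x, log (f u) ≤ log (identric (f x) (f y)) := by
  set L : ℝ → ℝ := fun u ↦ f y + (f x - f y) / (x - y) * (u - y)
  have hfL : ∀ u ∈ Icc y x, f u ≤ L u := fun u hu ↦ hf.le_chord hu
  have hLc : ContinuousOn L (Icc y x) := by fun_prop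
  have hIcc : uIcc y x = Icc y x := uIcc_of_le hyx.le
  have hmono : (∫ u in y..x, log (f u)) ≤ ∫ u in y..x, log (L u) := by
    refine integral_mono_on hyx.le ?_ ?_ fun u hu ↦ log_le_log (hpos u hu) (hfL u hu)
    · exact ((hfc.log fun u hu ↦ (hpos u hu).ne').mono hIcc.subset).intervalIntegrable
    · exact ((hLc.log fun u hu ↦ ((hpos u hu).trans_le (hfL u hu)).ne').mono
        hIcc.subset).intervalIntegrable
  rw [← mean_log_chord_eq_log_identric (hpos x (right_mem_Icc.2 hyx.le)) (hpos y (left_mem_Icc.2 hyx.le))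
    hne hyx.ne']
  exact mul_le_mul_of_nonneg_left hmono (by simp [hyx.le])

/-- If `f : (0,∞) → (0,∞)` is continuously differentiable, strictly increasing
and has increasing derivative (i.e. is convex), then for all `0 < y < x`,
`log I(f(x), f(y)) ≥ (1/(x-y)) ∫_y^x log f(u) du`. -/
theorem log_identric_ge_mean_log (f : ℝ → ℝ)
    (hpos : ∀ x ∈ Ioi (0 : ℝ), 0 < f x)
    (hder : ContDiffOn ℝ 1 f (Ioi 0))
    (hmono : StrictMonoOn f (Ioi 0))
    (hderiv_mono : MonotoneOn (deriv f) (Ioi 0)) :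
    ∀ x y : ℝ, 0 < y → y < x →
      Real.log (identric (f x) (f y)) ≥
        (1 / (x - y)) * ∫ u in y..x, Real.log (f u) := by
  intro x y hy hyx
  have hIcc : Icc y x ⊆ Ioi 0 := fun u hu ↦ hy.trans_le hu.1
  have hconv : ConvexOn ℝ (Ioi 0) f :=
    MonotoneOn.convexOn_of_deriv (convex_Ioi 0) hder.continuousOn
      (by simpa using hder.differentiableOn one_ne_zero) (by simpa using hderiv_mono)
  exact (hconv.subset hIcc (convex_Icc y x)).mean_log_le_log_identric hyx
    (hder.continuousOn.mono hIcc) (fun u hu ↦ hpos u (hIcc hu))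
    (hmono hy (hy.trans hyx) hyx).ne'
end

section
/- Let p ≤ 1 with p ∉ {0, −1}, and let f : (0,∞) → (0,∞) be continuously differentiable, strictly increasing and convex, such that the function x ↦ f(x)^{p−1} · f'(x) is increasing. Then for all distinct x, y ∈ (0,∞), J_p(f(x), f(y)) ≥ f(J_p(x, y)). -/
open Set

/-- The Alzer mean `J_p(a,b) = (p/(p+1)) * (a^(p+1) - b^(p+1))/(a^p - b^p)`
of distinct positive reals `a`, `b`, for `p ∉ {0, -1}`. -/
noncomputable def alzer (p a b : ℝ) : ℝ :=
  (p / (p + 1)) * ((a ^ (p + 1) - b ^ (p + 1)) / (a ^ p - b ^ p))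

/-!
For `y < x`, `J_p(x, y) = ∫ t w / ∫ w` over `[y, x]` with weight `w t = t ^ (p - 1)`, and the
substitution `s = f t` turns `J_p(f x, f y)` into `∫ f h / ∫ h` with `h = f ^ (p - 1) * f'`.
Put `m = J_p(x, y)`. As `f` and `h` increase together and `f` lies above its tangent at `m`,
`(f t - f m) h t ≥ (f t - f m) h m ≥ f'(m) h(m) (t - m)`, and `∫ (t - m) ≥ 0` because
`m ≤ (x + y) / 2`: for `p ≤ 1` the weight `w` decreases, so `J_p ≤ J_1`.
-/

open intervalIntegral
open MeasureTheory (volume)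

lemma alzer_comm (p a b : ℝ) : alzer p a b = alzer p b a := by
  unfold alzer
  rw [← neg_sub (b ^ (p + 1)), ← neg_sub (b ^ p), neg_div_neg_eq]

lemma integral_rpow_pos {a b : ℝ} (r : ℝ) (ha : 0 < a) (hab : a < b) :
    0 < ∫ t in a..b, t ^ r :=
  intervalIntegral_pos_of_pos_on
    (intervalIntegrable_rpow (Or.inr (notMem_uIcc_of_lt ha (ha.trans hab))))
    (fun _ ht => Real.rpow_pos_of_pos (ha.trans ht.1) r) hab

lemma integral_id_sub_const (a b m : ℝ) :
    ∫ t in b..a, (t - m) = (a - b) * ((a + b) / 2 - m) := by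
  rw [integral_sub intervalIntegrable_id intervalIntegrable_const, integral_id, integral_const,
    smul_eq_mul]
  ring

lemma integral_rpow_comp_mul_deriv {f f' : ℝ → ℝ} {a b : ℝ} (r : ℝ)
    (hf : ∀ t ∈ uIcc a b, HasDerivAt f (f' t) t) (hf' : ContinuousOn f' (uIcc a b))
    (hpos : ∀ t ∈ uIcc a b, 0 < f t) :
    ∫ t in a..b, f t ^ r * f' t = ∫ s in f a..f b, s ^ r :=
  integral_comp_mul_deriv' hf hf' fun _ ⟨t, ht, hts⟩ =>
    (Real.continuousAt_rpow_const _ r (Or.inl (hts ▸ (hpos t ht).ne'))).continuousWithinAt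

lemma alzer_eq_integral_div {p a b : ℝ} (hp0 : p ≠ 0) (hpm : p ≠ -1) (ha : 0 < a) (hb : 0 < b) :
    alzer p a b = (∫ t in b..a, t ^ p) / ∫ t in b..a, t ^ (p - 1) := by
  have h0 : (0 : ℝ) ∉ uIcc b a := notMem_uIcc_of_lt hb ha
  rw [integral_rpow (Or.inr ⟨hpm, h0⟩), integral_rpow (Or.inr ⟨by contrapose! hp0; linarith, h0⟩),
    sub_add_cancel, div_div_eq_mul_div, alzer]
  ring

lemma alzer_comp_eq_integral_div {p a b : ℝ} (hp0 : p ≠ 0) (hpm : p ≠ -1) {f f' : ℝ → ℝ}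
    (hf : ∀ t ∈ uIcc b a, HasDerivAt f (f' t) t) (hf' : ContinuousOn f' (uIcc b a))
    (hpos : ∀ t ∈ uIcc b a, 0 < f t) :
    alzer p (f a) (f b) =
      (∫ t in b..a, f t * (f t ^ (p - 1) * f' t)) / ∫ t in b..a, f t ^ (p - 1) * f' t := by
  have hfh : ∫ t in b..a, f t * (f t ^ (p - 1) * f' t) = ∫ t in b..a, f t ^ p * f' t := by
    refine integral_congr fun t ht => ?_
    rw [← mul_assoc, ← Real.rpow_one_add' (hpos t ht).le (by simpa using hp0)]
    ring_nf
  rw [alzer_eq_integral_div hp0 hpm (hpos a right_mem_uIcc) (hpos b left_mem_uIcc), hfh,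
    integral_rpow_comp_mul_deriv p hf hf' hpos, integral_rpow_comp_mul_deriv (p - 1) hf hf' hpos]

lemma alzer_pos {p a b : ℝ} (hp0 : p ≠ 0) (hpm : p ≠ -1) (hb : 0 < b) (hba : b < a) :
    0 < alzer p a b := by
  rw [alzer_eq_integral_div hp0 hpm (hb.trans hba) hb]
  exact div_pos (integral_rpow_pos p hb hba) (integral_rpow_pos (p - 1) hb hba)

lemma alzer_le_half_add {p a b : ℝ} (hp1 : p ≤ 1) (hp0 : p ≠ 0) (hpm : p ≠ -1) (hb : 0 < b)
    (hba : b < a) : alzer p a b ≤ (a + b) / 2 := by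
  set c := (a + b) / 2
  have hc : c ∈ Ioi (0 : ℝ) := by simp only [mem_Ioi, c]; linarith
  have hIcc : Icc b a ⊆ Ioi 0 := fun t ht => hb.trans_le ht.1
  have hanti : AntivaryOn (fun t : ℝ => t ^ (p - 1)) id (Ioi 0) :=
    (monotoneOn_id.antivaryOn (Real.antitoneOn_rpow_Ioi_of_exponent_nonpos (by linarith))).symm
  have hpt : ∀ t ∈ Icc b a, t ^ p ≤ c * t ^ (p - 1) + c ^ (p - 1) * (t - c) := by
    intro t ht
    have := hanti.sub_mul_sub_nonpos hc (hIcc ht)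
    rw [show t ^ p = t * t ^ (p - 1) by
      rw [← Real.rpow_one_add' (hIcc ht).le (by simpa using hp0)]; ring_nf]
    simp only [id] at this
    nlinarith
  have h0 : (0 : ℝ) ∉ uIcc b a := notMem_uIcc_of_lt hb (hb.trans hba)
  have hw : IntervalIntegrable (fun t : ℝ => t ^ (p - 1)) volume b a :=
    intervalIntegrable_rpow (Or.inr h0)
  have hlin : IntervalIntegrable (fun t => t - c) volume b a :=
    intervalIntegrable_id.sub intervalIntegrable_const
  have hint := integral_mono_on hba.le (intervalIntegrable_rpow (Or.inr h0))
    ((hw.const_mul c).add (hlin.const_mul _)) hpt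
  rw [integral_add (hw.const_mul c) (hlin.const_mul _), integral_const_mul, integral_const_mul,
    integral_id_sub_const, sub_self, mul_zero, mul_zero, add_zero] at hint
  rwa [alzer_eq_integral_div hp0 hpm (hb.trans hba) hb, div_le_iff₀ (integral_rpow_pos _ hb hba)]

lemma ConvexOn.add_deriv_mul_sub_le {f : ℝ → ℝ} {S : Set ℝ} {x y : ℝ} (hf : ConvexOn ℝ S f)
    (hx : x ∈ S) (hy : y ∈ S) (hfx : DifferentiableAt ℝ f x) :
    f x + deriv f x * (y - x) ≤ f y := by
  rcases lt_trichotomy x y with hxy | rfl | hyx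
  · have := hf.deriv_le_slope hx hy hxy hfx
    rw [slope_def_field, le_div_iff₀ (sub_pos.2 hxy)] at this
    linarith
  · simp
  · have := hf.slope_le_deriv hy hx hyx hfx
    rw [slope_def_field, div_le_iff₀ (sub_pos.2 hyx)] at this
    linarith

lemma mul_integral_le_integral_mul_of_tangent {f h : ℝ → ℝ} {s : Set ℝ} {a b m d : ℝ}
    (hba : b ≤ a) (hm : m ≤ (a + b) / 2) (hs : Icc b a ⊆ s) (hms : m ∈ s)
    (hf : MonotoneOn f s) (hh : MonotoneOn h s) (hd : 0 ≤ d) (hhm : 0 ≤ h m)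
    (htan : ∀ t ∈ Icc b a, f m + d * (t - m) ≤ f t)
    (hhi : IntervalIntegrable h volume b a)
    (hfhi : IntervalIntegrable (fun t => f t * h t) volume b a) :
    f m * ∫ t in b..a, h t ≤ ∫ t in b..a, f t * h t := by
  have hpt : ∀ t ∈ Icc b a, f m * h t + d * h m * (t - m) ≤ f t * h t := by
    intro t ht
    have hmv := (hh.monovaryOn hf).sub_mul_sub_nonneg hms (hs ht)
    have := mul_le_mul_of_nonneg_right (htan t ht) hhm
    nlinarith
  have hlin : IntervalIntegrable (fun t => t - m) volume b a :=
    intervalIntegrable_id.sub intervalIntegrable_const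
  have hint := integral_mono_on hba ((hhi.const_mul (f m)).add (hlin.const_mul (d * h m))) hfhi hpt
  rw [integral_add (hhi.const_mul _) (hlin.const_mul _), integral_const_mul, integral_const_mul,
    integral_id_sub_const] at hint
  have : 0 ≤ d * h m * ((a - b) * ((a + b) / 2 - m)) :=
    mul_nonneg (mul_nonneg hd hhm) (mul_nonneg (sub_nonneg.2 hba) (sub_nonneg.2 hm))
  linarith

lemma apply_alzer_le_alzer_of_lt {p : ℝ} (hp1 : p ≤ 1) (hp0 : p ≠ 0) (hpm : p ≠ -1) {f : ℝ → ℝ}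
    (hpos : ∀ x ∈ Ioi (0 : ℝ), 0 < f x) (hder : ContDiffOn ℝ 1 f (Ioi 0))
    (hmono : StrictMonoOn f (Ioi 0)) (hconv : ConvexOn ℝ (Ioi 0) f)
    (hinc : MonotoneOn (fun x => f x ^ (p - 1) * deriv f x) (Ioi 0))
    {x y : ℝ} (hy : 0 < y) (hyx : y < x) :
    f (alzer p x y) ≤ alzer p (f x) (f y) := by
  have hsub : uIcc y x ⊆ Ioi 0 := by
    rw [uIcc_of_le hyx.le]; exact fun t ht => hy.trans_le ht.1
  have hdiff : ∀ t ∈ Ioi (0 : ℝ), DifferentiableAt ℝ f t := fun t ht =>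
    (hder.differentiableOn one_ne_zero).differentiableAt (Ioi_mem_nhds ht)
  have hcf : ContinuousOn f (Ioi 0) := hder.continuousOn
  have hcd : ContinuousOn (deriv f) (Ioi 0) := hder.continuousOn_deriv_of_isOpen isOpen_Ioi le_rfl
  have hch : ContinuousOn (fun t => f t ^ (p - 1) * deriv f t) (Ioi 0) :=
    (hcf.rpow_const fun t ht => Or.inl (hpos t ht).ne').mul hcd
  have hf' : ∀ t ∈ uIcc y x, HasDerivAt f (deriv f t) t := fun t ht => (hdiff t (hsub ht)).hasDerivAt
  have hpos' : ∀ t ∈ uIcc y x, 0 < f t := fun t ht => hpos t (hsub ht)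
  have hden : 0 < ∫ t in y..x, f t ^ (p - 1) * deriv f t := by
    rw [integral_rpow_comp_mul_deriv _ hf' (hcd.mono hsub) hpos']
    exact integral_rpow_pos _ (hpos y hy) (hmono hy (hy.trans hyx) hyx)
  set m := alzer p x y
  have hm : m ∈ Ioi (0 : ℝ) := alzer_pos hp0 hpm hy hyx
  have hderiv_nonneg : 0 ≤ deriv f m :=
    hmono.monotoneOn.derivWithin_nonneg.trans_eq (derivWithin_of_isOpen isOpen_Ioi hm)
  rw [alzer_comp_eq_integral_div hp0 hpm hf' (hcd.mono hsub) hpos', le_div_iff₀ hden]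
  exact mul_integral_le_integral_mul_of_tangent hyx.le (alzer_le_half_add hp1 hp0 hpm hy hyx)
    (fun t ht => hy.trans_le ht.1) hm hmono.monotoneOn hinc hderiv_nonneg
    (mul_nonneg (Real.rpow_nonneg (hpos m hm).le _) hderiv_nonneg)
    (fun t ht => hconv.add_deriv_mul_sub_le hm (hy.trans_le ht.1) (hdiff m hm))
    (hch.mono hsub).intervalIntegrable ((hcf.mul hch).mono hsub).intervalIntegrable

/-- Let `p ≤ 1`, `p ∉ {0,-1}`. If `f : (0,∞) → (0,∞)` is continuously
differentiable, strictly increasing and convex, and `x ↦ f(x)^(p-1) * f'(x)`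
is increasing, then `J_p(f(x), f(y)) ≥ f(J_p(x,y))` for distinct `x, y > 0`. -/
theorem alzer_ge_of_convex (p : ℝ) (hp1 : p ≤ 1) (hp0 : p ≠ 0) (hpm : p ≠ -1)
    (f : ℝ → ℝ)
    (hpos : ∀ x ∈ Ioi (0 : ℝ), 0 < f x)
    (hder : ContDiffOn ℝ 1 f (Ioi 0))
    (hmono : StrictMonoOn f (Ioi 0))
    (hconv : ConvexOn ℝ (Ioi 0) f)
    (hinc : MonotoneOn (fun x => f x ^ (p - 1) * deriv f x) (Ioi 0)) :
    ∀ x ∈ Ioi (0 : ℝ), ∀ y ∈ Ioi (0 : ℝ), x ≠ y →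
      alzer p (f x) (f y) ≥ f (alzer p x y) := by
  intro x hx y hy hxy
  rcases hxy.lt_or_gt with hlt | hgt
  · rw [alzer_comm p (f x), alzer_comm p x]
    exact apply_alzer_le_alzer_of_lt hp1 hp0 hpm hpos hder hmono hconv hinc hx hlt
  · exact apply_alzer_le_alzer_of_lt hp1 hp0 hpm hpos hder hmono hconv hinc hy hgt
end

section
/- Let p, q ∈ ℝ and let f : [a,b] → (0,∞) be a differentiable function, where 0 < a < b. Then f is (p,q)-convex (respectively, (p,q)-concave) if and only if the function x ↦ x^{1−p} · f'(x) · f(x)^{q−1} is increasing (respectively, decreasing) on [a,b]. -/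
open Set

/-- The power mean `M_t(x,y)`: `((x^t + y^t)/2)^(1/t)` for `t ≠ 0`, and
`√(xy)` for `t = 0`. -/
noncomputable def powerMean (t x y : ℝ) : ℝ :=
  if t = 0 then Real.sqrt (x * y) else ((x ^ t + y ^ t) / 2) ^ (1 / t)

/-- `f` is `(p,q)`-convex on `s` if `f(M_p(x,y)) ≤ M_q(f(x), f(y))` for all
`x, y ∈ s`. -/
def IsPQConvexOn (p q : ℝ) (s : Set ℝ) (f : ℝ → ℝ) : Prop :=
  ∀ x ∈ s, ∀ y ∈ s, f (powerMean p x y) ≤ powerMean q (f x) (f y)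

/-- `f` is `(p,q)`-concave on `s` if `f(M_p(x,y)) ≥ M_q(f(x), f(y))` for all
`x, y ∈ s`. -/
def IsPQConcaveOn (p q : ℝ) (s : Set ℝ) (f : ℝ → ℝ) : Prop :=
  ∀ x ∈ s, ∀ y ∈ s, f (powerMean p x y) ≥ powerMean q (f x) (f y)

/-!
In the coordinate `u = boxCox p x`, where `boxCox t x = (x ^ t - 1) / t` (and `log x` for `t = 0`),
the power mean `M_p` becomes the arithmetic mean. Hence `f` is `(p,q)`-convex iff its conjugate
`G = boxCox q ∘ f ∘ (boxCox p)⁻¹` is midpoint convex, and by the chain rule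
`G' (boxCox p x) = x ^ (1 - p) * f' x * f x ^ (q - 1)`. A differentiable midpoint convex function
satisfies the tangent line inequality (take difference quotients along the dyadic points
`x + 2⁻ⁿ (y - x)`), so its derivative is monotone; conversely a monotone derivative gives convexity.
-/

noncomputable def boxCox (t x : ℝ) : ℝ :=
  if t = 0 then Real.log x else (x ^ t - 1) / t

noncomputable def boxCoxInv (t u : ℝ) : ℝ :=
  if t = 0 then Real.exp u else (1 + t * u) ^ (1 / t)

section BoxCox

variable (t : ℝ) {x y : ℝ}

theorem one_add_mul_boxCox (ht : t ≠ 0) : 1 + t * boxCox t x = x ^ t := by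
  simp only [boxCox, if_neg ht]
  field_simp
  ring

theorem boxCoxInv_boxCox (hx : 0 < x) : boxCoxInv t (boxCox t x) = x := by
  rcases eq_or_ne t 0 with rfl | ht
  · simp [boxCox, boxCoxInv, Real.exp_log hx]
  · rw [boxCoxInv, if_neg ht, one_add_mul_boxCox t ht, ← Real.rpow_mul hx.le,
      mul_one_div_cancel ht, Real.rpow_one]

theorem strictMonoOn_boxCox : StrictMonoOn (boxCox t) (Ioi 0) := by
  intro x hx y hy hxy
  rcases eq_or_ne t 0 with rfl | ht
  · simpa [boxCox] using Real.log_lt_log hx hxy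
  simp only [boxCox, if_neg ht]
  rcases ht.lt_or_gt with hneg | hpos
  · exact div_lt_div_of_neg_of_lt hneg (by linarith [Real.rpow_lt_rpow_of_neg hx hxy hneg])
  · exact div_lt_div_of_pos_right (by linarith [Real.rpow_lt_rpow hx.le hxy hpos]) hpos

theorem hasDerivAt_boxCox (hx : 0 < x) : HasDerivAt (boxCox t) (x ^ (t - 1)) x := by
  rcases eq_or_ne t 0 with rfl | ht
  · have : boxCox 0 = Real.log := funext fun z => by simp [boxCox]
    rw [this, zero_sub, Real.rpow_neg_one]
    exact Real.hasDerivAt_log hx.ne'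
  · have : boxCox t = fun z => (z ^ t - 1) / t := funext fun z => by simp [boxCox, ht]
    rw [this]
    refine (((Real.hasDerivAt_rpow_const (Or.inl hx.ne')).sub_const 1).div_const t).congr_deriv ?_
    field_simp

theorem hasDerivAt_boxCoxInv (hx : 0 < x) :
    HasDerivAt (boxCoxInv t) (x ^ (1 - t)) (boxCox t x) := by
  rcases eq_or_ne t 0 with rfl | ht
  · have : boxCoxInv 0 = Real.exp := funext fun z => by simp [boxCoxInv]
    simpa [this, boxCox, Real.exp_log hx] using Real.hasDerivAt_exp (Real.log x)
  · have : boxCoxInv t = fun u => (1 + t * u) ^ (1 / t) := funext fun u => by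
      simp [boxCoxInv, ht]
    rw [this]
    have hlin : HasDerivAt (fun u : ℝ => 1 + t * u) t (boxCox t x) := by
      simpa using ((hasDerivAt_id _).const_mul t).const_add 1
    have hbase : 1 + t * boxCox t x ≠ 0 := by
      rw [one_add_mul_boxCox t ht]; exact (Real.rpow_pos_of_pos hx t).ne'
    convert hlin.rpow_const (p := 1 / t) (Or.inl hbase) using 1
    rw [one_add_mul_boxCox t ht, ← Real.rpow_mul hx.le]
    field_simp

theorem powerMean_pos (hx : 0 < x) (hy : 0 < y) : 0 < powerMean t x y := by
  rcases eq_or_ne t 0 with rfl | ht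
  · simpa [powerMean] using mul_pos hx hy
  · rw [powerMean, if_neg ht]
    have := Real.rpow_pos_of_pos hx t
    have := Real.rpow_pos_of_pos hy t
    positivity

theorem boxCox_powerMean (hx : 0 < x) (hy : 0 < y) :
    boxCox t (powerMean t x y) = (boxCox t x + boxCox t y) / 2 := by
  rcases eq_or_ne t 0 with rfl | ht
  · simp only [boxCox, powerMean, ↓reduceIte]
    rw [Real.log_sqrt (mul_pos hx hy).le, Real.log_mul hx.ne' hy.ne']
  · have hsum : 0 < (x ^ t + y ^ t) / 2 := by
      have := Real.rpow_pos_of_pos hx t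
      have := Real.rpow_pos_of_pos hy t
      positivity
    simp only [boxCox, powerMean, if_neg ht]
    rw [← Real.rpow_mul hsum.le, one_div_mul_cancel ht, Real.rpow_one]
    ring

end BoxCox

theorem powerMean_mem_Icc (t : ℝ) {a b x y : ℝ} (ha : 0 < a) (hx : x ∈ Icc a b)
    (hy : y ∈ Icc a b) : powerMean t x y ∈ Icc a b := by
  have hx0 : 0 < x := ha.trans_le hx.1
  have hy0 : 0 < y := ha.trans_le hy.1
  have hb : 0 < b := hx0.trans_le hx.2
  have hle : ∀ {u v : ℝ}, 0 < u → 0 < v → (boxCox t u ≤ boxCox t v ↔ u ≤ v) := fun hu hv =>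
    (strictMonoOn_boxCox t).le_iff_le hu hv
  have hM := powerMean_pos t hx0 hy0
  rw [mem_Icc, ← hle ha hM, ← hle hM hb, boxCox_powerMean t hx0 hy0]
  constructor <;> linarith [(hle ha hx0).2 hx.1, (hle ha hy0).2 hy.1, (hle hx0 hb).2 hx.2,
    (hle hy0 hb).2 hy.2]

open Filter Topology

def MidpointConvexOn (S : Set ℝ) (g : ℝ → ℝ) : Prop :=
  ∀ x ∈ S, ∀ y ∈ S, g ((x + y) / 2) ≤ (g x + g y) / 2

def MidpointConcaveOn (S : Set ℝ) (g : ℝ → ℝ) : Prop :=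
  ∀ x ∈ S, ∀ y ∈ S, (g x + g y) / 2 ≤ g ((x + y) / 2)

section Midpoint

variable {S : Set ℝ} {g : ℝ → ℝ}

theorem MidpointConvexOn.add_deriv_mul_le (hS : Convex ℝ S) (hg : MidpointConvexOn S g)
    {x y g' : ℝ} (hx : x ∈ S) (hy : y ∈ S) (hd : HasDerivWithinAt g g' S x) :
    g x + g' * (y - x) ≤ g y := by
  rcases eq_or_ne y x with rfl | hyx
  · simp
  set z : ℕ → ℝ := fun n => x + (1 / 2) ^ n * (y - x)
  have hz_mem : ∀ n, z n ∈ S := fun n =>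
    hS.add_smul_sub_mem hx hy ⟨by positivity, pow_le_one₀ (by norm_num) (by norm_num)⟩
  have hz_ne : ∀ n, z n ≠ x := fun n => by simp [z, sub_ne_zero.2 hyx]
  have hdyadic : ∀ n : ℕ, 2 ^ n * (g (z n) - g x) ≤ g y - g x := by
    intro n
    induction n with
    | zero => simp [z]
    | succ n ih =>
      have hmid : g (z (n + 1)) ≤ (g x + g (z n)) / 2 := by
        convert hg x hx (z n) (hz_mem n) using 2
        simp only [z]; ring
      calc 2 ^ (n + 1) * (g (z (n + 1)) - g x) ≤ 2 ^ n * (g (z n) - g x) := by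
            rw [pow_succ]; nlinarith [pow_pos (two_pos : (0 : ℝ) < 2) n]
        _ ≤ g y - g x := ih
  have hslope : ∀ n, (y - x) * slope g x (z n) = 2 ^ n * (g (z n) - g x) := fun n => by
    have hzx : z n - x = (y - x) / 2 ^ n := by simp only [z, one_div, inv_pow]; ring
    rw [slope_def_field, hzx]
    field_simp [sub_ne_zero.2 hyx]
  have hz_lim : Tendsto z atTop (𝓝[S \ {x}] x) := by
    refine tendsto_nhdsWithin_iff.2 ⟨?_, Eventually.of_forall fun n => ⟨hz_mem n, hz_ne n⟩⟩
    simpa [z] using ((tendsto_pow_atTop_nhds_zero_of_lt_one (by norm_num : (0 : ℝ) ≤ 1 / 2)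
      (by norm_num)).mul_const (y - x)).const_add x
  have hlim := ((hasDerivWithinAt_iff_tendsto_slope.mp hd).comp hz_lim).const_mul (y - x)
  have : (y - x) * g' ≤ g y - g x :=
    le_of_tendsto hlim (Eventually.of_forall fun n => (hslope n).trans_le (hdyadic n))
  linarith

theorem ConvexOn.midpointConvexOn (hg : ConvexOn ℝ S g) : MidpointConvexOn S g := by
  intro x hx y hy
  have := hg.2 hx hy (by norm_num : (0 : ℝ) ≤ 1 / 2) (by norm_num : (0 : ℝ) ≤ 1 / 2) (by norm_num)
  simp only [smul_eq_mul] at this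
  rw [show (x + y) / 2 = 1 / 2 * x + 1 / 2 * y by ring]
  linarith

theorem midpointConvexOn_iff_monotoneOn {g' : ℝ → ℝ} (hS : Convex ℝ S)
    (hd : ∀ x ∈ S, HasDerivWithinAt g (g' x) S x) :
    MidpointConvexOn S g ↔ MonotoneOn g' S := by
  constructor
  · intro hg x hx y hy hxy
    rcases hxy.eq_or_lt with rfl | hlt
    · rfl
    have h₁ := hg.add_deriv_mul_le hS hx hy (hd x hx)
    have h₂ := hg.add_deriv_mul_le hS hy hx (hd y hy)
    nlinarith
  · intro hmono
    have hat : ∀ x ∈ interior S, HasDerivAt g (g' x) x := fun x hx =>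
      (hd x (interior_subset hx)).hasDerivAt (mem_interior_iff_mem_nhds.1 hx)
    refine ConvexOn.midpointConvexOn (MonotoneOn.convexOn_of_deriv hS
      (fun x hx => (hd x hx).continuousWithinAt)
      (fun x hx => (hat x hx).differentiableAt.differentiableWithinAt) ?_)
    intro x hx y hy hxy
    rw [(hat x hx).deriv, (hat y hy).deriv]
    exact hmono (interior_subset hx) (interior_subset hy) hxy

theorem midpointConcaveOn_iff_antitoneOn {g' : ℝ → ℝ} (hS : Convex ℝ S)
    (hd : ∀ x ∈ S, HasDerivWithinAt g (g' x) S x) :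
    MidpointConcaveOn S g ↔ AntitoneOn g' S := by
  have := midpointConvexOn_iff_monotoneOn hS fun x hx => (hd x hx).neg
  simpa only [MidpointConvexOn, MidpointConcaveOn, MonotoneOn, AntitoneOn, Pi.neg_apply,
    ← neg_add, neg_div, neg_le_neg_iff] using this

end Midpoint

section Transfer

variable {α β γ : Type*} [LinearOrder α] [Preorder β] [Preorder γ]
  {φ : α → β} {ψ : β → α} {h : α → γ} {s : Set α}

theorem StrictMonoOn.monotoneOn_comp_image_iff (hφ : StrictMonoOn φ s) (hψ : LeftInvOn ψ φ s) :
    MonotoneOn (h ∘ ψ) (φ '' s) ↔ MonotoneOn h s := by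
  simp only [MonotoneOn, forall_mem_image, Function.comp_apply]
  refine forall₂_congr fun x hx => forall₂_congr fun y hy => ?_
  rw [hψ hx, hψ hy, hφ.le_iff_le hx hy]

theorem StrictMonoOn.antitoneOn_comp_image_iff (hφ : StrictMonoOn φ s) (hψ : LeftInvOn ψ φ s) :
    AntitoneOn (h ∘ ψ) (φ '' s) ↔ AntitoneOn h s := by
  simp only [AntitoneOn, forall_mem_image, Function.comp_apply]
  refine forall₂_congr fun x hx => forall₂_congr fun y hy => ?_
  rw [hψ hx, hψ hy, hφ.le_iff_le hx hy]

end Transfer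

noncomputable def pqConjugate (p q : ℝ) (f : ℝ → ℝ) (u : ℝ) : ℝ :=
  boxCox q (f (boxCoxInv p u))

section PQConjugate

variable {p q : ℝ} {f : ℝ → ℝ}

theorem pqConjugate_boxCox {x : ℝ} (hx : 0 < x) :
    pqConjugate p q f (boxCox p x) = boxCox q (f x) := by
  rw [pqConjugate, boxCoxInv_boxCox p hx]

theorem hasDerivWithinAt_pqConjugate {s : Set ℝ} (hs : s ⊆ Ioi 0) {x f'x : ℝ} (hx : x ∈ s)
    (hfx : 0 < f x) (hf : HasDerivWithinAt f f'x s x) :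
    HasDerivWithinAt (pqConjugate p q f) (x ^ (1 - p) * f'x * f x ^ (q - 1))
      (boxCox p '' s) (boxCox p x) := by
  have hψx : boxCoxInv p (boxCox p x) = x := boxCoxInv_boxCox p (hs hx)
  have hmaps : MapsTo (boxCoxInv p) (boxCox p '' s) s := by
    rintro _ ⟨y, hy, rfl⟩
    rwa [boxCoxInv_boxCox p (hs hy)]
  have hf' : HasDerivWithinAt f f'x s (boxCoxInv p (boxCox p x)) := by rwa [hψx]
  have hq : HasDerivAt (boxCox q) (f x ^ (q - 1)) (f (boxCoxInv p (boxCox p x))) := by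
    rw [hψx]; exact hasDerivAt_boxCox q hfx
  refine (hq.comp_hasDerivWithinAt (boxCox p x)
    (hf'.comp (boxCox p x) (hasDerivAt_boxCoxInv p (hs hx)).hasDerivWithinAt hmaps)).congr_deriv ?_
  ring

theorem isPQConvexOn_iff_midpointConvexOn {a b : ℝ} (ha : 0 < a)
    (hpos : ∀ x ∈ Icc a b, 0 < f x) :
    IsPQConvexOn p q (Icc a b) f ↔ MidpointConvexOn (boxCox p '' Icc a b) (pqConjugate p q f) := by
  simp only [MidpointConvexOn, forall_mem_image]
  refine forall₂_congr fun x hx => forall₂_congr fun y hy => ?_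
  have hx0 : 0 < x := ha.trans_le hx.1
  have hy0 : 0 < y := ha.trans_le hy.1
  rw [← boxCox_powerMean p hx0 hy0, pqConjugate_boxCox (powerMean_pos p hx0 hy0),
    pqConjugate_boxCox hx0, pqConjugate_boxCox hy0,
    ← boxCox_powerMean q (hpos x hx) (hpos y hy),
    (strictMonoOn_boxCox q).le_iff_le (hpos _ (powerMean_mem_Icc p ha hx hy))
      (powerMean_pos q (hpos x hx) (hpos y hy))]

theorem isPQConcaveOn_iff_midpointConcaveOn {a b : ℝ} (ha : 0 < a)
    (hpos : ∀ x ∈ Icc a b, 0 < f x) :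
    IsPQConcaveOn p q (Icc a b) f ↔
      MidpointConcaveOn (boxCox p '' Icc a b) (pqConjugate p q f) := by
  simp only [MidpointConcaveOn, forall_mem_image]
  refine forall₂_congr fun x hx => forall₂_congr fun y hy => ?_
  have hx0 : 0 < x := ha.trans_le hx.1
  have hy0 : 0 < y := ha.trans_le hy.1
  rw [← boxCox_powerMean p hx0 hy0, pqConjugate_boxCox (powerMean_pos p hx0 hy0),
    pqConjugate_boxCox hx0, pqConjugate_boxCox hy0,
    ← boxCox_powerMean q (hpos x hx) (hpos y hy),
    (strictMonoOn_boxCox q).le_iff_le (powerMean_pos q (hpos x hx) (hpos y hy))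
      (hpos _ (powerMean_mem_Icc p ha hx hy))]

end PQConjugate

theorem pq_convex_iff_general (p q a b : ℝ) (ha : 0 < a) (f f' : ℝ → ℝ)
    (hpos : ∀ x ∈ Icc a b, 0 < f x)
    (hder : ∀ x ∈ Icc a b, HasDerivWithinAt f (f' x) (Icc a b) x) :
    (IsPQConvexOn p q (Icc a b) f ↔
      MonotoneOn (fun x => x ^ (1 - p) * f' x * f x ^ (q - 1)) (Icc a b)) ∧
    (IsPQConcaveOn p q (Icc a b) f ↔
      AntitoneOn (fun x => x ^ (1 - p) * f' x * f x ^ (q - 1)) (Icc a b)) := by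
  have hI : Icc a b ⊆ Ioi 0 := fun x hx => ha.trans_le hx.1
  have hφ : StrictMonoOn (boxCox p) (Icc a b) := (strictMonoOn_boxCox p).mono hI
  have hψ : LeftInvOn (boxCoxInv p) (boxCox p) (Icc a b) := fun x hx =>
    boxCoxInv_boxCox p (hI hx)
  have hS : Convex ℝ (boxCox p '' Icc a b) :=
    (isPreconnected_Icc.image _ fun x hx =>
      (hasDerivAt_boxCox p (hI hx)).continuousAt.continuousWithinAt).convex
  have hG : ∀ u ∈ boxCox p '' Icc a b, HasDerivWithinAt (pqConjugate p q f)
      (((fun x => x ^ (1 - p) * f' x * f x ^ (q - 1)) ∘ boxCoxInv p) u) (boxCox p '' Icc a b) u := by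
    rintro _ ⟨x, hx, rfl⟩
    simpa only [Function.comp_apply, hψ hx] using
      hasDerivWithinAt_pqConjugate hI hx (hpos x hx) (hder x hx)
  rw [isPQConvexOn_iff_midpointConvexOn ha hpos, isPQConcaveOn_iff_midpointConcaveOn ha hpos,
    midpointConvexOn_iff_monotoneOn hS hG, midpointConcaveOn_iff_antitoneOn hS hG,
    hφ.monotoneOn_comp_image_iff hψ, hφ.antitoneOn_comp_image_iff hψ]
  exact ⟨Iff.rfl, Iff.rfl⟩

/-- Baricz's criterion: a positive differentiable function `f` on `[a,b]`,
`0 < a < b`, is `(p,q)`-convex (resp. `(p,q)`-concave) if and only if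
`x ↦ x^(1-p) f'(x) f(x)^(q-1)` is increasing (resp. decreasing) on `[a,b]`. -/
theorem pq_convex_iff (p q a b : ℝ) (ha : 0 < a) (hab : a < b) (f f' : ℝ → ℝ)
    (hpos : ∀ x ∈ Icc a b, 0 < f x)
    (hder : ∀ x ∈ Icc a b, HasDerivWithinAt f (f' x) (Icc a b) x) :
    (IsPQConvexOn p q (Icc a b) f ↔
      MonotoneOn (fun x => x ^ (1 - p) * f' x * f x ^ (q - 1)) (Icc a b)) ∧
    (IsPQConcaveOn p q (Icc a b) f ↔
      AntitoneOn (fun x => x ^ (1 - p) * f' x * f x ^ (q - 1)) (Icc a b)) :=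
  pq_convex_iff_general p q a b ha f f' hpos hder
end

section
/- Let f : I → (0,∞) be continuous on a subinterval I ⊆ (0,∞). If f is increasing and log-convex, then f is LL-convex, i.e. for all x, y ∈ I, f(L(x,y)) ≤ L(f(x), f(y)). -/
open Set MeasureTheory intervalIntegral Real

/-- The logarithmic mean `L(a,b) = (a-b)/(log a - log b)`, with `L(a,a) = a`. -/
noncomputable def logMean (a b : ℝ) : ℝ :=
  if a = b then a else (a - b) / (Real.log a - Real.log b)

lemma logMean_comm (a b : ℝ) : logMean a b = logMean b a := by
  unfold logMean
  rcases eq_or_ne a b with h | h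
  · simp [h]
  · rw [if_neg h, if_neg (Ne.symm h), ← neg_div_neg_eq]
    ring_nf

lemma logMean_eq_integral {a b : ℝ} (ha : 0 < a) (hb : 0 < b) :
    logMean a b = ∫ t in (0:ℝ)..1, Real.exp (t * Real.log a + (1 - t) * Real.log b) := by
  have hrw : (fun t : ℝ => Real.exp (t * Real.log a + (1 - t) * Real.log b))
      = fun t : ℝ => Real.exp (t * (Real.log a - Real.log b) + Real.log b) := by
    funext t; congr 1; ring
  rw [hrw]
  rcases eq_or_ne a b with h | h
  · subst h
    simp [logMean, Real.exp_log ha]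
  · have hlog : Real.log a - Real.log b ≠ 0 := by
      intro hc
      exact h (Real.log_injOn_pos (mem_Ioi.2 ha) (mem_Ioi.2 hb) (by linarith))
    set c := Real.log a - Real.log b with hc
    have hderiv : ∀ t ∈ uIcc (0:ℝ) 1, HasDerivAt
        (fun t : ℝ => Real.exp (t * c + Real.log b) / c)
        (Real.exp (t * c + Real.log b)) t := by
      intro t _
      have h1 : HasDerivAt (fun t : ℝ => t * c + Real.log b) c t := by
        simpa using ((hasDerivAt_id t).mul_const c).add_const (Real.log b)
      have h2 := h1.exp
      have h3 := h2.div_const c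
      simpa [mul_div_assoc, mul_div_cancel_right₀ _ hlog] using h3
    have hcont : IntervalIntegrable (fun t : ℝ => Real.exp (t * c + Real.log b))
        volume 0 1 :=
      (Real.continuous_exp.comp (by continuity)).intervalIntegrable 0 1
    rw [intervalIntegral.integral_eq_sub_of_hasDerivAt hderiv hcont]
    have e1 : Real.exp ((1:ℝ) * c + Real.log b) = a := by
      rw [one_mul, hc]
      rw [sub_add_cancel, Real.exp_log ha]
    have e0 : Real.exp ((0:ℝ) * c + Real.log b) = b := by
      rw [zero_mul, zero_add, Real.exp_log hb]
    rw [e1, e0, logMean, if_neg h, div_sub_div_same]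

lemma exp_comb_mem_Icc {x y : ℝ} (hx : 0 < x) (hxy : x ≤ y) {t : ℝ} (ht : t ∈ Icc (0:ℝ) 1) :
    Real.exp (t * Real.log x + (1 - t) * Real.log y) ∈ Icc x y := by
  have hy : 0 < y := lt_of_lt_of_le hx hxy
  have hl : Real.log x ≤ Real.log y := Real.log_le_log hx hxy
  constructor
  · calc x = Real.exp (Real.log x) := (Real.exp_log hx).symm
      _ ≤ _ := Real.exp_le_exp.2 (by nlinarith [ht.1, ht.2])
  · calc Real.exp (t * Real.log x + (1 - t) * Real.log y)
        ≤ Real.exp (Real.log y) := Real.exp_le_exp.2 (by nlinarith [ht.1, ht.2])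
      _ = y := Real.exp_log hy

lemma exp_comb_le_comb {x y : ℝ} (hx : 0 < x) (hy : 0 < y) {t : ℝ} (ht : t ∈ Icc (0:ℝ) 1) :
    Real.exp (t * Real.log x + (1 - t) * Real.log y) ≤ t * x + (1 - t) * y := by
  have h := Real.geom_mean_le_arith_mean2_weighted (w₁ := t) (w₂ := 1 - t) (p₁ := x)
    (p₂ := y) ht.1 (by linarith [ht.2]) hx.le hy.le (by ring)
  calc Real.exp (t * Real.log x + (1 - t) * Real.log y)
      = x ^ t * y ^ (1 - t) := by
        rw [Real.exp_add, Real.rpow_def_of_pos hx, Real.rpow_def_of_pos hy,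
          mul_comm (Real.log x), mul_comm (Real.log y)]
    _ ≤ t * x + (1 - t) * y := h

/-- If `f : I → (0,∞)` is continuous, increasing and log-convex on a
subinterval `I ⊆ (0,∞)`, then `f` is `LL`-convex:
`f(L(x,y)) ≤ L(f(x), f(y))` for all `x, y ∈ I`. -/
theorem LL_convex_of_increasing_logConvex (I : Set ℝ) (hI : I ⊆ Ioi 0)
    (hIconv : Convex ℝ I) (f : ℝ → ℝ)
    (hpos : ∀ x ∈ I, 0 < f x)
    (hcont : ContinuousOn f I)
    (hmono : MonotoneOn f I)
    (hlogconv : ConvexOn ℝ I (fun x => Real.log (f x))) :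
    ∀ x ∈ I, ∀ y ∈ I, f (logMean x y) ≤ logMean (f x) (f y) := by
  have hconvf : ConvexOn ℝ I f := by
    refine ⟨hIconv, fun a ha b hb s t hs ht hst => ?_⟩
    have hmem : s • a + t • b ∈ I := hIconv ha hb hs ht hst
    have h := hlogconv.2 ha hb hs ht hst
    calc f (s • a + t • b) = Real.exp (Real.log (f (s • a + t • b))) :=
          (Real.exp_log (hpos _ hmem)).symm
      _ ≤ Real.exp (s * Real.log (f a) + t * Real.log (f b)) :=
          Real.exp_le_exp.2 (by simpa [smul_eq_mul] using h)
      _ ≤ s * Real.exp (Real.log (f a)) + t * Real.exp (Real.log (f b)) := by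
          simpa [smul_eq_mul] using
            convexOn_exp.2 (mem_univ (Real.log (f a))) (mem_univ (Real.log (f b))) hs ht hst
      _ = s • f a + t • f b := by
          rw [Real.exp_log (hpos a ha), Real.exp_log (hpos b hb)]; simp [smul_eq_mul]
  intro x hx y hy
  wlog hxy : x ≤ y with H
  · rw [logMean_comm x y, logMean_comm (f x) (f y)]
    exact H I hI hIconv f hpos hcont hmono hlogconv hconvf y hy x hx (le_of_not_ge hxy)
  rcases eq_or_lt_of_le hxy with rfl | hlt
  · simp [logMean]
  have hx0 : 0 < x := hI hx
  have hy0 : 0 < y := hI hy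
  have hfx0 : 0 < f x := hpos x hx
  have hfy0 : 0 < f y := hpos y hy
  have hfxy : f x ≤ f y := hmono hx hy hxy
  have hIcc : Icc x y ⊆ I := hIconv.ordConnected.out hx hy
  set g : ℝ → ℝ := fun t => Real.exp (t * Real.log x + (1 - t) * Real.log y) with hg
  set h : ℝ → ℝ := fun t => Real.exp (t * Real.log (f x) + (1 - t) * Real.log (f y)) with hh
  have hgmem : ∀ t ∈ Icc (0:ℝ) 1, g t ∈ Icc x y := fun t ht => exp_comb_mem_Icc hx0 hxy ht
  have hgcont : Continuous g := Real.continuous_exp.comp (by continuity)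
  have hhcont : Continuous h := Real.continuous_exp.comp (by continuity)
  -- the measure
  set μ : Measure ℝ := volume.restrict (Icc (0:ℝ) 1) with hμ
  haveI : IsProbabilityMeasure μ := ⟨by simp [hμ]⟩
  have hint_eq : ∀ (F : ℝ → ℝ), (∫ t, F t ∂μ) = ∫ t in (0:ℝ)..1, F t := by
    intro F
    rw [intervalIntegral.integral_of_le zero_le_one, hμ,
      ← MeasureTheory.integral_Icc_eq_integral_Ioc]
  -- logMean x y as integral of g
  have hLg : logMean x y = ∫ t, g t ∂μ := by
    rw [hint_eq]; exact logMean_eq_integral hx0 hy0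
  have hLh : logMean (f x) (f y) = ∫ t, h t ∂μ := by
    rw [hint_eq]; exact logMean_eq_integral hfx0 hfy0
  -- Jensen
  have hgs : ∀ᵐ t ∂μ, g t ∈ Icc x y :=
    (MeasureTheory.ae_restrict_mem measurableSet_Icc).mono hgmem
  have hgi : MeasureTheory.Integrable g μ :=
    (hgcont.integrableOn_Icc : IntegrableOn g (Icc 0 1) volume)
  have hfgcont : ContinuousOn (f ∘ g) (Icc (0:ℝ) 1) :=
    hcont.comp hgcont.continuousOn (fun t ht => hIcc (hgmem t ht))
  have hfgi : MeasureTheory.Integrable (f ∘ g) μ :=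
    (hfgcont.integrableOn_Icc : IntegrableOn (f ∘ g) (Icc 0 1) volume)
  have hjensen : f (∫ t, g t ∂μ) ≤ ∫ t, f (g t) ∂μ :=
    (hconvf.subset hIcc (convex_Icc x y)).map_integral_le
      (hcont.mono hIcc) isClosed_Icc hgs hgi hfgi
  -- pointwise comparison f ∘ g ≤ h
  have hpt : ∀ t ∈ Icc (0:ℝ) 1, f (g t) ≤ h t := by
    intro t ht
    have hcomb : t * x + (1 - t) * y ∈ I :=
      hIconv hx hy ht.1 (by linarith [ht.2]) (by ring)
    have h1 : f (g t) ≤ f (t * x + (1 - t) * y) :=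
      hmono (hIcc (hgmem t ht)) hcomb (exp_comb_le_comb hx0 hy0 ht)
    have h2 : Real.log (f (t * x + (1 - t) * y))
        ≤ t * Real.log (f x) + (1 - t) * Real.log (f y) := by
      simpa [smul_eq_mul] using hlogconv.2 hx hy ht.1 (by linarith [ht.2] : (0:ℝ) ≤ 1 - t)
        (by ring : t + (1 - t) = 1)
    calc f (g t) ≤ f (t * x + (1 - t) * y) := h1
      _ = Real.exp (Real.log (f (t * x + (1 - t) * y))) :=
          (Real.exp_log (hpos _ hcomb)).symm
      _ ≤ h t := Real.exp_le_exp.2 h2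
  have hhi : MeasureTheory.Integrable h μ :=
    (hhcont.integrableOn_Icc : IntegrableOn h (Icc 0 1) volume)
  have hint_le : (∫ t, f (g t) ∂μ) ≤ ∫ t, h t ∂μ := by
    refine MeasureTheory.integral_mono_ae hfgi hhi ?_
    exact (MeasureTheory.ae_restrict_mem measurableSet_Icc).mono hpt
  calc f (logMean x y) = f (∫ t, g t ∂μ) := by rw [hLg]
    _ ≤ ∫ t, f (g t) ∂μ := hjensen
    _ ≤ ∫ t, h t ∂μ := hint_le
    _ = logMean (f x) (f y) := hLh.symm
end

section
/- Let f : I → (0,∞) be continuous on a subinterval I ⊆ (0,∞). If f is increasing and log-convex, then f is AL-convex, i.e. for all x, y ∈ I, f(A(x,y)) ≤ L(f(x), f(y)), where A(x,y) = (x+y)/2 is the arithmetic mean. -/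
open Set

/-- key inequality: `2 log s ≤ s - 1/s` for `s ≥ 1`. -/
lemma two_log_le (s : ℝ) (hs : 1 ≤ s) : 2 * Real.log s ≤ s - 1 / s := by
  have h := Real.self_le_sinh_iff.mpr (Real.log_nonneg hs)
  have hs0 : 0 < s := lt_of_lt_of_le one_pos hs
  rw [Real.sinh_eq, Real.exp_log hs0, Real.exp_neg, Real.exp_log hs0] at h
  rw [one_div]
  linarith

/-- Geometric mean ≤ logarithmic mean, case `b < a`. -/
lemma sqrt_le_logMean_aux (a b : ℝ) (hb : 0 < b) (h : b < a) :
    Real.sqrt (a * b) ≤ logMean a b := by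
  have ha : 0 < a := hb.trans h
  unfold logMean
  rw [if_neg (ne_of_gt h)]
  have hlog : 0 < Real.log a - Real.log b := by
    have := Real.log_lt_log hb h; linarith
  rw [le_div_iff₀ hlog]
  set s := Real.sqrt a / Real.sqrt b with hs
  have hsa : 0 < Real.sqrt a := Real.sqrt_pos.mpr ha
  have hsb : 0 < Real.sqrt b := Real.sqrt_pos.mpr hb
  have hs1 : 1 ≤ s := by
    rw [hs, le_div_iff₀ hsb, one_mul]
    exact Real.sqrt_le_sqrt h.le
  have hlogs : Real.log a - Real.log b = 2 * Real.log s := by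
    rw [hs, Real.log_div (ne_of_gt hsa) (ne_of_gt hsb), Real.log_sqrt ha.le,
      Real.log_sqrt hb.le]
    ring
  have key := two_log_le s hs1
  have hsab : Real.sqrt (a * b) = Real.sqrt a * Real.sqrt b := Real.sqrt_mul ha.le b
  have h1 : Real.sqrt a * Real.sqrt a = a := Real.mul_self_sqrt ha.le
  have h2 : Real.sqrt b * Real.sqrt b = b := Real.mul_self_sqrt hb.le
  rw [hsab, hlogs]
  have step : Real.sqrt a * Real.sqrt b * (2 * Real.log s) ≤
      Real.sqrt a * Real.sqrt b * (s - 1 / s) :=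
    mul_le_mul_of_nonneg_left key (by positivity)
  refine step.trans_eq ?_
  rw [hs]
  field_simp
  nlinarith [h1, h2]

/-- Geometric mean ≤ logarithmic mean. -/
lemma sqrt_le_logMean (a b : ℝ) (ha : 0 < a) (hb : 0 < b) :
    Real.sqrt (a * b) ≤ logMean a b := by
  rcases lt_trichotomy a b with h | h | h
  · have := sqrt_le_logMean_aux b a ha h
    unfold logMean at this ⊢
    rw [if_neg (ne_of_gt h)] at this
    rw [if_neg (ne_of_lt h)]
    rw [mul_comm] at this
    refine this.trans_eq ?_
    rw [div_eq_div_iff]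
    · ring
    · have := Real.log_lt_log ha h; linarith
    · have := Real.log_lt_log ha h; linarith
  · unfold logMean
    rw [if_pos h, h, Real.sqrt_mul_self hb.le]
  · exact sqrt_le_logMean_aux a b hb h

/-- If `f : I → (0,∞)` is continuous, increasing and log-convex on a
subinterval `I ⊆ (0,∞)`, then `f` is `AL`-convex:
`f(A(x,y)) ≤ L(f(x), f(y))` for all `x, y ∈ I`, where `A(x,y) = (x+y)/2`. -/
theorem AL_convex_of_increasing_logConvex (I : Set ℝ) (hI : I ⊆ Ioi 0)
    (hIconv : Convex ℝ I) (f : ℝ → ℝ)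
    (hpos : ∀ x ∈ I, 0 < f x)
    (hcont : ContinuousOn f I)
    (hmono : MonotoneOn f I)
    (hlogconv : ConvexOn ℝ I (fun x => Real.log (f x))) :
    ∀ x ∈ I, ∀ y ∈ I, f ((x + y) / 2) ≤ logMean (f x) (f y) := by
  intro x hx y hy
  have hm : (x + y) / 2 ∈ I := by
    have := hIconv hx hy (by norm_num : (0:ℝ) ≤ 1/2) (by norm_num : (0:ℝ) ≤ 1/2) (by norm_num)
    simp only [smul_eq_mul] at this
    have heq : (1/2:ℝ) * x + (1/2:ℝ) * y = (x + y) / 2 := by ring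
    rwa [heq] at this
  have hconv := hlogconv.2 hx hy (by norm_num : (0:ℝ) ≤ 1/2) (by norm_num : (0:ℝ) ≤ 1/2)
    (by norm_num)
  simp only [smul_eq_mul] at hconv
  have hmid : (1/2 : ℝ) * x + (1/2 : ℝ) * y = (x + y) / 2 := by ring
  rw [hmid] at hconv
  have hfm : 0 < f ((x + y) / 2) := hpos _ hm
  have hfx : 0 < f x := hpos _ hx
  have hfy : 0 < f y := hpos _ hy
  have hGM : f ((x + y) / 2) ≤ Real.sqrt (f x * f y) := by
    have hlogGM : Real.log (f ((x + y) / 2)) ≤ Real.log (Real.sqrt (f x * f y)) := by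
      rw [Real.log_sqrt (by positivity), Real.log_mul (ne_of_gt hfx) (ne_of_gt hfy)]
      linarith
    exact (Real.log_le_log_iff hfm (Real.sqrt_pos.mpr (by positivity))).mp hlogGM
  exact hGM.trans (sqrt_le_logMean (f x) (f y) hfx hfy)
end
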